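/- Let E, F be vector lattices with F Dedekind complete. For an abstract Uryson operator T : E → F and f ∈ E, the positive part T⁺ in U(E,F) satisfies T⁺(f) = sup{ Tg : g ⊑ f }, where g ⊑ f means g is a fragment of f. -/

import Mathlib

/-- Orthogonal additivity: `T (x + y) = T x + T y` whenever `|x| ⊓ |y| = 0`. -/
def OrthAdd {E F : Type*} [Lattice E] [AddCommGroup E] [AddCommGroup F]
    (T : E → F) : Prop :=
  ∀ x y : E, |x| ⊓ |y| = 0 → T (x + y) = T x + T y

/-- `T` maps order bounded sets to order bounded sets. -/
def OrderBoundedMap {E F : Type*} [Preorder E] [Preorder F] (T : E → F) : Prop :=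
  ∀ a b : E, ∃ c d : F, ∀ x ∈ Set.Icc a b, T x ∈ Set.Icc c d

/-- An abstract Uryson operator: orthogonally additive and order bounded. -/
def Uryson {E F : Type*} [Lattice E] [AddCommGroup E] [Lattice F] [AddCommGroup F]
    (T : E → F) : Prop :=
  OrthAdd T ∧ OrderBoundedMap T

/-- `z` is a fragment (component) of `x`: `z ⊥ (x - z)`. -/
def Fragment {E : Type*} [Lattice E] [AddCommGroup E] (z x : E) : Prop :=
  |z| ⊓ |x - z| = 0

/-!
The positive part is `P f = sup { T g : g ⊑ f }`. It dominates `T` because `f ⊑ f` and `0`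
because `0 ⊑ f` and `T 0 = 0`; it lies below every orthogonally additive `U ≥ T, 0` because
`g ⊑ f` gives `U f = U g + U (f - g) ≥ T g`. The substance is that `P` is again orthogonally
additive: for `x ⊥ y` the fragments of `x + y` are exactly the sums `u + v` of fragments
`u ⊑ x`, `v ⊑ y` (a fragment `z` splits as `u = z⁺ ⊓ x⁺ - z⁻ ⊓ x⁻`, `v = z⁺ ⊓ y⁺ - z⁻ ⊓ y⁻`),
and `u ⊥ v`, so the values of `T` on fragments of `x + y` form the Minkowski sum of those on
fragments of `x` and of `y`, whose supremum in the Dedekind complete `F` is the sum of suprema.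
-/

theorem inf_eq_zero_of_le_of_le {α : Type*} [Lattice α] [Zero α] {a b c d : α} (ha : 0 ≤ a)
    (hb : 0 ≤ b) (hac : a ≤ c) (hbd : b ≤ d) (hcd : c ⊓ d = 0) : a ⊓ b = 0 :=
  le_antisymm ((inf_le_inf hac hbd).trans_eq hcd) (le_inf ha hb)

section LatticeOrderedGroup

variable {α : Type*} [Lattice α] [AddCommGroup α] [AddLeftMono α]

theorem inf_add_le_inf_add_inf {a b c : α} (ha : 0 ≤ a) (hb : 0 ≤ b) (hc : 0 ≤ c) :
    a ⊓ (b + c) ≤ a ⊓ b + a ⊓ c := by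
  rw [← sub_le_iff_le_add', sub_inf]
  refine sup_le (le_inf ?_ ?_) (le_inf ?_ ?_)
  · exact (sub_nonpos.mpr inf_le_left).trans ha
  · exact (sub_nonpos.mpr inf_le_left).trans hc
  · exact (sub_le_sub_right inf_le_left b).trans (sub_le_self a hb)
  · exact sub_le_iff_le_add'.mpr inf_le_right

theorem inf_add_eq_zero {a b c : α} (ha : 0 ≤ a) (hb : 0 ≤ b) (hc : 0 ≤ c)
    (hab : a ⊓ b = 0) (hac : a ⊓ c = 0) : a ⊓ (b + c) = 0 :=
  le_antisymm ((inf_add_le_inf_add_inf ha hb hc).trans_eq (by rw [hab, hac, add_zero]))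
    (le_inf ha (add_nonneg hb hc))

theorem add_inf_eq_zero {a b c : α} (ha : 0 ≤ a) (hb : 0 ≤ b) (hc : 0 ≤ c)
    (hac : a ⊓ c = 0) (hbc : b ⊓ c = 0) : (a + b) ⊓ c = 0 := by
  rw [inf_comm] at hac hbc ⊢
  exact inf_add_eq_zero hc ha hb hac hbc

theorem sup_eq_add_of_inf_eq_zero {a b : α} (hab : a ⊓ b = 0) : a ⊔ b = a + b := by
  rw [← inf_add_sup a b, hab, zero_add]

theorem posPart_sub_of_inf_eq_zero {a b : α} (hab : a ⊓ b = 0) : (a - b)⁺ = a := by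
  have h := sup_eq_add_posPart_sub a b
  rwa [sup_eq_add_of_inf_eq_zero hab, add_comm, add_left_cancel_iff, eq_comm] at h

theorem negPart_sub_of_inf_eq_zero {a b : α} (hab : a ⊓ b = 0) : (a - b)⁻ = b := by
  rw [← posPart_neg, neg_sub, posPart_sub_of_inf_eq_zero (by rwa [inf_comm])]

theorem posPart_le_abs (a : α) : a⁺ ≤ |a| :=
  (le_add_of_nonneg_right (negPart_nonneg a)).trans_eq (posPart_add_negPart a)

theorem negPart_le_abs (a : α) : a⁻ ≤ |a| :=
  (le_add_of_nonneg_left (posPart_nonneg a)).trans_eq (posPart_add_negPart a)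

theorem add_posPart_inf_add_negPart_eq_zero {a b : α} (hab : |a| ⊓ |b| = 0) :
    (a⁺ + b⁺) ⊓ (a⁻ + b⁻) = 0 := by
  have hba : |b| ⊓ |a| = 0 := by rwa [inf_comm]
  refine add_inf_eq_zero (posPart_nonneg a) (posPart_nonneg b)
    (add_nonneg (negPart_nonneg a) (negPart_nonneg b)) ?_ ?_
  · exact inf_add_eq_zero (posPart_nonneg a) (negPart_nonneg a) (negPart_nonneg b)
      (posPart_inf_negPart_eq_zero a) (inf_eq_zero_of_le_of_le (posPart_nonneg a)
        (negPart_nonneg b) (posPart_le_abs a) (negPart_le_abs b) hab)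
  · exact inf_add_eq_zero (posPart_nonneg b) (negPart_nonneg a) (negPart_nonneg b)
      (inf_eq_zero_of_le_of_le (posPart_nonneg b) (negPart_nonneg a) (posPart_le_abs b)
        (negPart_le_abs a) hba) (posPart_inf_negPart_eq_zero b)

theorem add_eq_add_posPart_sub_add_negPart (a b : α) : a + b = (a⁺ + b⁺) - (a⁻ + b⁻) := by
  rw [add_sub_add_comm, posPart_sub_negPart, posPart_sub_negPart]

theorem posPart_add_of_abs_inf_abs_eq_zero {a b : α} (hab : |a| ⊓ |b| = 0) :
    (a + b)⁺ = a⁺ + b⁺ := by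
  rw [add_eq_add_posPart_sub_add_negPart,
    posPart_sub_of_inf_eq_zero (add_posPart_inf_add_negPart_eq_zero hab)]

theorem negPart_add_of_abs_inf_abs_eq_zero {a b : α} (hab : |a| ⊓ |b| = 0) :
    (a + b)⁻ = a⁻ + b⁻ := by
  rw [add_eq_add_posPart_sub_add_negPart,
    negPart_sub_of_inf_eq_zero (add_posPart_inf_add_negPart_eq_zero hab)]

theorem abs_add_of_abs_inf_abs_eq_zero {a b : α} (hab : |a| ⊓ |b| = 0) :
    |a + b| = |a| + |b| := by
  rw [← posPart_add_negPart, posPart_add_of_abs_inf_abs_eq_zero hab,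
    negPart_add_of_abs_inf_abs_eq_zero hab, add_add_add_comm, posPart_add_negPart,
    posPart_add_negPart]

theorem inf_add_inf_eq_of_le_add {a b z : α} (ha : 0 ≤ a) (hb : 0 ≤ b) (hz : 0 ≤ z)
    (hab : a ⊓ b = 0) (hzab : z ≤ a + b) : z ⊓ a + z ⊓ b = z := by
  refine le_antisymm ?_ ((inf_eq_left.mpr hzab).symm.trans_le (inf_add_le_inf_add_inf hz ha hb))
  rw [← sup_eq_add_of_inf_eq_zero (inf_eq_zero_of_le_of_le (le_inf hz ha) (le_inf hz hb)
    inf_le_right inf_le_right hab)]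
  exact sup_le inf_le_left inf_le_left

end LatticeOrderedGroup

namespace Fragment

variable {α : Type*} [Lattice α] [AddCommGroup α] {x y z u v : α}

theorem compl (h : Fragment z x) : Fragment (x - z) x := by
  rwa [Fragment, sub_sub_cancel, inf_comm]

theorem neg (h : Fragment z x) : Fragment (-z) (-x) := by
  rwa [Fragment, abs_neg, neg_sub_neg, abs_sub_comm]

variable [AddLeftMono α]

theorem refl (x : α) : Fragment x x := by
  rw [Fragment, sub_self, abs_zero, inf_eq_right]
  exact abs_nonneg x

theorem zero_left (x : α) : Fragment 0 x := by
  rw [Fragment, abs_zero, sub_zero, inf_eq_left]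
  exact abs_nonneg x

theorem abs_le (h : Fragment z x) : |z| ≤ |x| := by
  rw [← add_sub_cancel z x, abs_add_of_abs_inf_abs_eq_zero h]
  exact le_add_of_nonneg_right (abs_nonneg _)

theorem abs_inf_abs_eq_zero (hxy : |x| ⊓ |y| = 0) (hu : Fragment u x) (hv : Fragment v y) :
    |u| ⊓ |v| = 0 :=
  inf_eq_zero_of_le_of_le (abs_nonneg u) (abs_nonneg v) hu.abs_le hv.abs_le hxy

theorem posPart (h : Fragment z x) : Fragment z⁺ x⁺ :=
  inf_eq_zero_of_le_of_le (abs_nonneg _) (abs_nonneg _)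
    ((abs_of_nonneg (posPart_nonneg z)).trans_le (posPart_le_abs z))
    (abs_sup_sub_sup_le_abs x z 0) h

theorem negPart (h : Fragment z x) : Fragment z⁻ x⁻ := by
  simpa only [posPart_neg] using h.neg.posPart

theorem add (hxy : |x| ⊓ |y| = 0) (hu : Fragment u x) (hv : Fragment v y) :
    Fragment (u + v) (x + y) := by
  have hyx : |y| ⊓ |x| = 0 := by rwa [inf_comm]
  refine inf_eq_zero_of_le_of_le (abs_nonneg _) (abs_nonneg _) (abs_add_le u v)
    ((add_sub_add_comm x y u v).symm ▸ abs_add_le _ _) ?_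
  refine add_inf_eq_zero (abs_nonneg _) (abs_nonneg _) (add_nonneg (abs_nonneg _) (abs_nonneg _))
    (inf_add_eq_zero (abs_nonneg _) (abs_nonneg _) (abs_nonneg _) hu ?_)
    (inf_add_eq_zero (abs_nonneg _) (abs_nonneg _) (abs_nonneg _) ?_ hv)
  · exact hu.abs_inf_abs_eq_zero hxy hv.compl
  · exact hv.abs_inf_abs_eq_zero hyx hu.compl

theorem sub_of_posPart_negPart {w : α} (hu : Fragment u x⁺) (hw : Fragment w x⁻) :
    Fragment (u - w) x := by
  have hx : |x⁺| ⊓ |-x⁻| = 0 := by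
    rw [abs_neg, abs_of_nonneg (posPart_nonneg x), abs_of_nonneg (negPart_nonneg x)]
    exact posPart_inf_negPart_eq_zero x
  simpa only [← sub_eq_add_neg, posPart_sub_negPart] using add hx hu hw.neg

theorem le_of_nonneg (hz : 0 ≤ z) (hx : 0 ≤ x) (h : Fragment z x) : z ≤ x := by
  simpa only [abs_of_nonneg hz, abs_of_nonneg hx] using h.abs_le

theorem iff_inf_sub_eq_zero_of_nonneg (hz : 0 ≤ z) (hzx : z ≤ x) :
    Fragment z x ↔ z ⊓ (x - z) = 0 := by
  rw [Fragment, abs_of_nonneg hz, abs_of_nonneg (sub_nonneg.mpr hzx)]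

theorem inf_left_of_nonneg {a b : α} (ha : 0 ≤ a) (hb : 0 ≤ b) (hz : 0 ≤ z) (hab : a ⊓ b = 0)
    (h : Fragment z (a + b)) : Fragment (z ⊓ a) a := by
  have hzab := h.le_of_nonneg hz (add_nonneg ha hb)
  have hcompl : a - z ⊓ a ≤ a + b - z := calc
    a - z ⊓ a = a + b - (z ⊓ a + b) := by abel
    _ ≤ a + b - (z ⊓ a + z ⊓ b) := sub_le_sub_left (add_le_add_right inf_le_right _) _
    _ = a + b - z := by rw [inf_add_inf_eq_of_le_add ha hb hz hab hzab]
  rw [iff_inf_sub_eq_zero_of_nonneg (le_inf hz ha) inf_le_right]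
  exact inf_eq_zero_of_le_of_le (le_inf hz ha) (sub_nonneg.mpr inf_le_right) inf_le_left hcompl
    ((iff_inf_sub_eq_zero_of_nonneg hz hzab).mp h)

theorem inf_right_of_nonneg {a b : α} (ha : 0 ≤ a) (hb : 0 ≤ b) (hz : 0 ≤ z) (hab : a ⊓ b = 0)
    (h : Fragment z (a + b)) : Fragment (z ⊓ b) b :=
  inf_left_of_nonneg hb ha hz (inf_comm a b ▸ hab) (add_comm a b ▸ h)

theorem exists_add_of_abs_inf_abs_eq_zero (hxy : |x| ⊓ |y| = 0) (h : Fragment z (x + y)) :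
    ∃ u v, Fragment u x ∧ Fragment v y ∧ z = u + v := by
  have hpos : x⁺ ⊓ y⁺ = 0 := inf_eq_zero_of_le_of_le (posPart_nonneg x) (posPart_nonneg y)
    (posPart_le_abs x) (posPart_le_abs y) hxy
  have hneg : x⁻ ⊓ y⁻ = 0 := inf_eq_zero_of_le_of_le (negPart_nonneg x) (negPart_nonneg y)
    (negPart_le_abs x) (negPart_le_abs y) hxy
  have hp : Fragment z⁺ (x⁺ + y⁺) := posPart_add_of_abs_inf_abs_eq_zero hxy ▸ h.posPart
  have hn : Fragment z⁻ (x⁻ + y⁻) := negPart_add_of_abs_inf_abs_eq_zero hxy ▸ h.negPart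
  have hxp := posPart_nonneg x
  have hyp := posPart_nonneg y
  have hzp := posPart_nonneg z
  have hxn := negPart_nonneg x
  have hyn := negPart_nonneg y
  have hzn := negPart_nonneg z
  refine ⟨z⁺ ⊓ x⁺ - z⁻ ⊓ x⁻, z⁺ ⊓ y⁺ - z⁻ ⊓ y⁻,
    sub_of_posPart_negPart (hp.inf_left_of_nonneg hxp hyp hzp hpos)
      (hn.inf_left_of_nonneg hxn hyn hzn hneg),
    sub_of_posPart_negPart (hp.inf_right_of_nonneg hxp hyp hzp hpos)
      (hn.inf_right_of_nonneg hxn hyn hzn hneg), ?_⟩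
  rw [sub_add_sub_comm,
    inf_add_inf_eq_of_le_add hxp hyp hzp hpos (hp.le_of_nonneg hzp (add_nonneg hxp hyp)),
    inf_add_inf_eq_of_le_add hxn hyn hzn hneg (hn.le_of_nonneg hzn (add_nonneg hxn hyn)),
    posPart_sub_negPart]

end Fragment

section FragmentSup

open scoped Pointwise

variable {E F : Type*} [Lattice E] [AddCommGroup E] [AddLeftMono E]

theorem OrthAdd.map_zero [AddCommGroup F] {T : E → F} (hT : OrthAdd T) : T 0 = 0 := by
  simpa using hT 0 0 (by simp)

theorem Fragment.mem_Icc {f g M : E} (h : Fragment g f) (hM : |f| ≤ M) : g ∈ Set.Icc (-M) M :=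
  have hg := abs_le'.mp (h.abs_le.trans hM)
  ⟨neg_le.mp hg.2, hg.1⟩

theorem abs_le_abs_sup_abs_of_mem_Icc {a b x : E} (hx : x ∈ Set.Icc a b) : |x| ≤ |a| ⊔ |b| :=
  abs_le'.mpr ⟨hx.2.trans ((le_abs_self b).trans le_sup_right),
    (neg_le_neg_iff.mpr hx.1).trans ((neg_le_abs a).trans le_sup_left)⟩

theorem image_fragments_nonempty (T : E → F) (f : E) : (T '' {g | Fragment g f}).Nonempty :=
  ⟨T f, f, Fragment.refl f, rfl⟩

theorem OrderBoundedMap.bddAbove_image_fragments [Preorder F] {T : E → F}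
    (hT : OrderBoundedMap T) (f : E) : BddAbove (T '' {g | Fragment g f}) := by
  obtain ⟨c, d, hcd⟩ := hT (-|f|) |f|
  exact ⟨d, Set.forall_mem_image.mpr fun g hg => (hcd g (hg.mem_Icc le_rfl)).2⟩

theorem OrthAdd.image_fragments_add [AddCommGroup F] {T : E → F} (hT : OrthAdd T) {x y : E}
    (hxy : |x| ⊓ |y| = 0) :
    T '' {g | Fragment g (x + y)} = T '' {g | Fragment g x} + T '' {g | Fragment g y} := by
  ext w
  simp only [Set.mem_image, Set.mem_add, Set.mem_ofPred_eq]
  constructor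
  · rintro ⟨z, hz, rfl⟩
    obtain ⟨u, v, hu, hv, rfl⟩ := hz.exists_add_of_abs_inf_abs_eq_zero hxy
    exact ⟨T u, ⟨u, hu, rfl⟩, T v, ⟨v, hv, rfl⟩, (hT u v (hu.abs_inf_abs_eq_zero hxy hv)).symm⟩
  · rintro ⟨_, ⟨u, hu, rfl⟩, _, ⟨v, hv, rfl⟩, rfl⟩
    exact ⟨u + v, Fragment.add hxy hu hv, hT u v (hu.abs_inf_abs_eq_zero hxy hv)⟩

variable [ConditionallyCompleteLattice F] {T : E → F}

def fragmentSup (T : E → F) (f : E) : F :=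
  sSup (T '' {g | Fragment g f})

theorem le_fragmentSup (hT : OrderBoundedMap T) {f g : E} (h : Fragment g f) :
    T g ≤ fragmentSup T f :=
  le_csSup (hT.bddAbove_image_fragments f) ⟨g, h, rfl⟩

theorem fragmentSup_le {f : E} {c : F} (h : ∀ g, Fragment g f → T g ≤ c) :
    fragmentSup T f ≤ c :=
  csSup_le (image_fragments_nonempty T f) (Set.forall_mem_image.mpr h)

theorem OrderBoundedMap.fragmentSup (hT : OrderBoundedMap T) :
    OrderBoundedMap (fragmentSup T) := by
  intro a b
  obtain ⟨c, d, hcd⟩ := hT (-(|a| ⊔ |b|)) (|a| ⊔ |b|)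
  refine ⟨c, d, fun x hx => ?_⟩
  have hxM := abs_le_abs_sup_abs_of_mem_Icc hx
  exact ⟨(hcd x ((Fragment.refl x).mem_Icc hxM)).1.trans (le_fragmentSup hT (Fragment.refl x)),
    fragmentSup_le fun g hg => (hcd g (hg.mem_Icc hxM)).2⟩

variable [AddCommGroup F] [AddLeftMono F]

theorem Uryson.fragmentSup (hT : Uryson T) : Uryson (fragmentSup T) := by
  refine ⟨fun x y hxy => ?_, hT.2.fragmentSup⟩
  rw [_root_.fragmentSup, hT.1.image_fragments_add hxy]
  exact csSup_add (image_fragments_nonempty T x) (hT.2.bddAbove_image_fragments x)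
    (image_fragments_nonempty T y) (hT.2.bddAbove_image_fragments y)

theorem fragmentSup_le_of_le {U : E → F} (hU : OrthAdd U) (hTU : ∀ x, T x ≤ U x)
    (hU0 : ∀ x, 0 ≤ U x) (x : E) : fragmentSup T x ≤ U x :=
  fragmentSup_le fun g hg => calc
    T g ≤ U g + U (x - g) := (hTU g).trans (le_add_of_nonneg_right (hU0 _))
    _ = U x := by rw [← hU g (x - g) hg, add_sub_cancel]

end FragmentSup

theorem stmt4_general {E F : Type*} [Lattice E] [AddCommGroup E]
    [CovariantClass E E (· + ·) (· ≤ ·)]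
    [ConditionallyCompleteLattice F] [AddCommGroup F]
    [CovariantClass F F (· + ·) (· ≤ ·)]
    (T : E → F) (hT : Uryson T) :
    ∃ P : E → F, Uryson P ∧
      (∀ x, T x ≤ P x) ∧ (∀ x, 0 ≤ P x) ∧
      (∀ U : E → F, Uryson U → (∀ x, T x ≤ U x) → (∀ x, 0 ≤ U x) → ∀ x, P x ≤ U x) ∧
      ∀ f : E, P f = sSup {v : F | ∃ g : E, Fragment g f ∧ v = T g} := by
  refine ⟨fragmentSup T, hT.fragmentSup,
    fun x => le_fragmentSup hT.2 (Fragment.refl x),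
    fun x => hT.1.map_zero ▸ le_fragmentSup hT.2 (Fragment.zero_left x),
    fun U hU hTU hU0 => fragmentSup_le_of_le hU.1 hTU hU0, fun f => ?_⟩
  simp only [fragmentSup, Set.image, Set.mem_ofPred_eq, eq_comm]

/-- For `F` Dedekind complete and an abstract Uryson operator `T : E → F`, the positive
part `T⁺` of `T` in `U(E,F)` (the supremum of `T` and `0`) satisfies
`T⁺ f = sup { T g : g ⊑ f }`, the supremum over the fragments of `f`. -/
theorem stmt4 {E F : Type*} [Lattice E] [AddCommGroup E]
    [CovariantClass E E (· + ·) (· ≤ ·)] [Module ℝ E]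
    [ConditionallyCompleteLattice F] [AddCommGroup F]
    [CovariantClass F F (· + ·) (· ≤ ·)] [Module ℝ F]
    (T : E → F) (hT : Uryson T) :
    ∃ P : E → F, Uryson P ∧
      (∀ x, T x ≤ P x) ∧ (∀ x, 0 ≤ P x) ∧
      (∀ U : E → F, Uryson U → (∀ x, T x ≤ U x) → (∀ x, 0 ≤ U x) → ∀ x, P x ≤ U x) ∧
      ∀ f : E, P f = sSup {v : F | ∃ g : E, Fragment g f ∧ v = T g} :=
  stmt4_general T hT
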